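/- arXiv:0712.0379 — 6 statements merged into one kernel-verified Lean document; each statement's English description precedes it below -/
import Mathlib

section
/- Let m ≥ 1 be an integer. For i = 2m+1,…,3m set the nodes x_i = i(i−2m)/(2(2m+1)) ∈ ℝ (these are pairwise distinct) and values y_i = C(i, 2m+1) (ordinary binomial coefficient), and let L_m ∈ ℝ[X] be the Lagrange interpolation polynomial of degree ≤ m−1 through these m points. Then for every real number t with t ∉ {2m+1,…,3m} and t ∉ {−m,…,−1}, one has L_m(t(t−2m)/(2(2m+1))) = ( ∏_{i=2m+1}^{3m} (t−i)(t−2m+i) / (2m+1)! ) · ∑_{i=2m+1}^{3m} ( (i!)² (−1)^{i+m} / ( ((i−2m−1)!)² (3m−i)! (i+m)! ) ) · ( 1/(t−i) − 1/(t−2m+i) ). -/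
/-!
With `x_i = node m i`, differences of nodes factor as
`node m a - node m b = (a - b)(a - 2m + b) / (2(2m+1))`, so in the Lagrange formula
`L(node m t) = ∑ᵢ yᵢ ∏_{j ≠ i} (node m t - node m j) / (node m i - node m j)`
the scaling cancels and each factor is `(t - j)(t - 2m + j) / ((i - j)(i - 2m + j))`.
Over `j ≠ i` the products of `i - j` and of `i - 2m + j` are signed factorials, and the
missing `j = i` factors `(t - i)(t - 2m + i)` and `i - 2m + i` combine into
`1 / (t - i) - 1 / (t - 2m + i) = (i - 2m + i) / ((t - i)(t - 2m + i))`.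
-/

open Polynomial Finset
open scoped Nat

namespace Lagrange

variable {F ι : Type*} [Field F] [DecidableEq ι] (s : Finset ι) (v r : ι → F) (x : F)

theorem eval_basis_eq_prod (i : ι) :
    (Lagrange.basis s v i).eval x = ∏ j ∈ s.erase i, (x - v j) / (v i - v j) := by
  simp only [Lagrange.basis, basisDivisor, eval_prod, eval_mul, eval_C, eval_sub, eval_X,
    inv_mul_eq_div]

theorem eval_interpolate_eq_sum_prod :
    (interpolate s v r).eval x =
      ∑ i ∈ s, r i * ∏ j ∈ s.erase i, (x - v j) / (v i - v j) := by
  simp only [interpolate_apply, eval_finsetSum, eval_mul, eval_C, eval_basis_eq_prod]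

end Lagrange

section FactorialProducts

variable {R : Type*} [CommRing R]

theorem prod_Ico_natCast_sub (a i : ℕ) : ∏ j ∈ Ico a i, ((i : R) - j) = (i - a)! := by
  rw [← prod_Ico_id_eq_factorial, Nat.cast_prod]
  refine prod_nbij' (i - ·) (i - ·) ?_ ?_ ?_ ?_ ?_ <;> intro j hj <;>
    simp only [mem_Ico] at hj ⊢
  all_goals first | omega | rw [Nat.cast_sub (by omega)]

theorem prod_Ioc_natCast_sub (i b : ℕ) : ∏ j ∈ Ioc i b, ((j : R) - i) = (b - i)! := by
  rw [← prod_Ico_id_eq_factorial, Nat.cast_prod]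
  refine prod_nbij' (· - i) (· + i) ?_ ?_ ?_ ?_ ?_ <;> intro j hj <;>
    simp only [mem_Ico, mem_Ioc] at hj ⊢
  all_goals first | omega | rw [Nat.cast_sub (by omega)]

theorem prod_erase_Icc_natCast_sub {a b i : ℕ} (hai : a ≤ i) (hib : i ≤ b) :
    ∏ j ∈ (Icc a b).erase i, ((i : R) - j) = (-1) ^ (b - i) * ((i - a)! * (b - i)!) := by
  have hsplit : (Icc a b).erase i = Ico a i ∪ Ioc i b := by
    ext j; simp only [mem_erase, mem_Icc, mem_union, mem_Ico, mem_Ioc]; omega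
  have hdisj : Disjoint (Ico a i) (Ioc i b) :=
    disjoint_left.2 fun j hj hj' => by simp only [mem_Ico, mem_Ioc] at hj hj'; omega
  rw [hsplit, prod_union hdisj, prod_Ico_natCast_sub, ← prod_Ioc_natCast_sub i b,
    ← Nat.card_Ioc i b, mul_left_comm, ← prod_neg]
  simp only [neg_sub]

theorem factorial_mul_prod_Icc_natCast_add (c k n : ℕ) :
    (c ! : R) * ∏ j ∈ Icc (k + 1) (k + n), ((c : R) - k + j) = (c + n)! := by
  induction n with
  | zero => simp
  | succ n ih =>
    rw [← add_assoc, prod_Icc_succ_top (by omega), ← mul_assoc, ih, ← add_assoc,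
      Nat.factorial_succ, Nat.cast_mul]
    push_cast
    ring

end FactorialProducts

noncomputable def node (m : ℕ) (t : ℝ) : ℝ := t * (t - 2 * m) / (2 * (2 * m + 1))

theorem node_sub_node (m : ℕ) (a b : ℝ) :
    node m a - node m b = (a - b) * (a - 2 * m + b) / (2 * (2 * m + 1)) := by
  unfold node
  ring

theorem node_sub_div_node_sub (m : ℕ) (t a b : ℝ) :
    (node m t - node m b) / (node m a - node m b)
      = ((t - b) * (t - 2 * m + b)) / ((a - b) * (a - 2 * m + b)) := by
  rw [node_sub_node, node_sub_node, div_div_div_cancel_right₀ (by positivity)]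

theorem node_injOn (m : ℕ) : Set.InjOn (fun a : ℕ => node m a) (Set.Ioi m) := by
  intro a (ha : m < a) b (hb : m < b) hab
  have hpos : (0 : ℝ) < a - 2 * m + b := by
    have : (m : ℝ) < a := by exact_mod_cast ha
    have : (m : ℝ) < b := by exact_mod_cast hb
    linarith
  have hzero : ((a : ℝ) - b) * (a - 2 * m + b) / (2 * (2 * m + 1)) = 0 := by
    rw [← node_sub_node]
    exact sub_eq_zero.2 hab
  have hab' := (div_eq_zero_iff.1 hzero).resolve_right (by positivity)
  exact_mod_cast sub_eq_zero.1 ((mul_eq_zero.1 hab').resolve_right hpos.ne')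

theorem choose_mul_prod_node_sub_div_node_sub {m i : ℕ} (hi : i ∈ Icc (2 * m + 1) (3 * m))
    {t : ℝ} (hti : t ≠ i) (hti' : t ≠ 2 * m - i) :
    (i.choose (2 * m + 1) : ℝ) *
        ∏ j ∈ (Icc (2 * m + 1) (3 * m)).erase i, (node m t - node m j) / (node m i - node m j)
      = ((∏ j ∈ Icc (2 * m + 1) (3 * m), (t - j) * (t - 2 * m + j)) / (2 * m + 1)!) *
        ((i ! : ℝ) ^ 2 * (-1) ^ (i + m) / ((i - (2 * m + 1))! ^ 2 * (3 * m - i)! * (i + m)!) *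
          (1 / (t - i) - 1 / (t - 2 * m + i))) := by
  obtain ⟨hi1, hi2⟩ := mem_Icc.1 hi
  have hti₀ : t - i ≠ 0 := sub_ne_zero.2 hti
  have hti₀' : t - 2 * m + i ≠ 0 := fun h => hti' (by linarith)
  have hii : (i : ℝ) - 2 * m + i ≠ 0 := by
    have : (2 * m + 1 : ℝ) ≤ i := by exact_mod_cast hi1
    linarith
  have hnum : ∏ j ∈ (Icc (2 * m + 1) (3 * m)).erase i, ((t - j) * (t - 2 * m + j))
      = (∏ j ∈ Icc (2 * m + 1) (3 * m), (t - j) * (t - 2 * m + j)) /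
          ((t - i) * (t - 2 * m + i)) :=
    eq_div_of_mul_eq (mul_ne_zero hti₀ hti₀') (prod_erase_mul _ _ hi)
  have hquad : ∏ j ∈ (Icc (2 * m + 1) (3 * m)).erase i, ((i : ℝ) - 2 * m + j)
      = (i + m)! / (i ! * ((i : ℝ) - 2 * m + i)) := by
    have hfull := factorial_mul_prod_Icc_natCast_add (R := ℝ) i (2 * m) m
    rw [show 2 * m + m = 3 * m by ring, ← mul_prod_erase _ _ hi] at hfull
    push_cast at hfull
    rw [eq_div_iff (by positivity), ← hfull]
    ring
  have hsign : (-1 : ℝ) ^ (3 * m - i) = (-1) ^ (i + m) := by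
    rw [show i + m = 3 * m - i + 2 * (i - m) by omega, pow_add, pow_mul, neg_one_sq, one_pow,
      mul_one]
  have hden : ∏ j ∈ (Icc (2 * m + 1) (3 * m)).erase i, (((i : ℝ) - j) * (i - 2 * m + j))
      = (-1) ^ (i + m) * ((i - (2 * m + 1))! * (3 * m - i)!) *
          ((i + m)! / (i ! * ((i : ℝ) - 2 * m + i))) := by
    rw [prod_mul_distrib, prod_erase_Icc_natCast_sub hi1 hi2, hsign, hquad]
  rw [prod_congr rfl fun (j : ℕ) _ => node_sub_div_node_sub m t i j, prod_div_distrib, hnum, hden,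
    Nat.cast_choose ℝ hi1]
  rcases neg_one_pow_eq_or ℝ (i + m) with hε | hε <;> rw [hε] <;> field_simp <;> ring

/-- Explicit formula for the Lagrange interpolation polynomial `L_m`
(the unique real polynomial of degree ≤ m-1) through the points
`(i(i-2m)/(2(2m+1)), C(i,2m+1))`, `i = 2m+1, …, 3m`, evaluated at `t(t-2m)/(2(2m+1))`. -/
theorem stmt_1 (m : ℕ) (hm : 1 ≤ m) (L : Polynomial ℝ)
    (hdeg : L.degree ≤ ((m - 1 : ℕ) : WithBot ℕ))
    (hinterp : ∀ i ∈ Finset.Icc (2 * m + 1) (3 * m),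
      L.eval ((i : ℝ) * ((i : ℝ) - 2 * m) / (2 * (2 * m + 1)))
        = (Nat.choose i (2 * m + 1) : ℝ))
    (t : ℝ)
    (ht : ∀ i ∈ Finset.Icc (2 * m + 1) (3 * m), t ≠ (i : ℝ) ∧ t ≠ 2 * m - (i : ℝ)) :
    L.eval (t * (t - 2 * m) / (2 * (2 * m + 1)))
      = ((∏ i ∈ Finset.Icc (2 * m + 1) (3 * m), (t - (i : ℝ)) * (t - 2 * m + (i : ℝ)))
          / (Nat.factorial (2 * m + 1) : ℝ))
        * ∑ i ∈ Finset.Icc (2 * m + 1) (3 * m),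
            ((Nat.factorial i : ℝ) ^ 2 * (-1 : ℝ) ^ (i + m)
              / ((Nat.factorial (i - (2 * m + 1)) : ℝ) ^ 2
                  * (Nat.factorial (3 * m - i) : ℝ) * (Nat.factorial (i + m) : ℝ)))
            * (1 / (t - (i : ℝ)) - 1 / (t - 2 * m + (i : ℝ))) := by
  have hinj : Set.InjOn (fun i : ℕ => node m i) (Icc (2 * m + 1) (3 * m) : Set ℕ) :=
    (node_injOn m).mono fun i hi => by
      simp only [coe_Icc, Set.mem_Icc] at hi
      exact (by omega : m < i)
  have hdeg_lt : L.degree < #(Icc (2 * m + 1) (3 * m)) := by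
    refine hdeg.trans_lt ?_
    rw [Nat.card_Icc]
    exact_mod_cast (by omega : m - 1 < 3 * m + 1 - (2 * m + 1))
  rw [Lagrange.eq_interpolate_of_eval_eq _ hinj hdeg_lt hinterp,
    Lagrange.eval_interpolate_eq_sum_prod, mul_sum]
  exact sum_congr rfl fun i hi => choose_mul_prod_node_sub_div_node_sub hi (ht i hi).1 (ht i hi).2
end

section
/- Let m ≥ 1 be an integer. For every rational number t, ∑_{k=0}^{2m} (−1)^k C(2m,k) · Ch(t, 4m+1−k) · Ch(t, 2m+1+k) = ( (−1)^m C(2m,m) / C(4m+1,m) ) · Ch(t, 3m+1) · Ch(t+m, 3m+1), where C(n,k) denotes the ordinary binomial coefficient and Ch(x,r) the generalized binomial coefficient. -/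
/-!
Both sides are polynomials in `t`, so it suffices to check the identity at the integers
`t ≥ 3m + 1`. There both sides satisfy the first order recurrence
`(t - 3m)(t - 2m) f(t + 1) = (t + 1)(t + m + 1) f(t)`, whose leading coefficient does not vanish:
for the sum this is a Wilf–Zeilberger telescoping, for the product it is immediate. At `t = 3m + 1`
only the term `k = m` of the sum survives, and both sides equal `(-1)^m C(2m, m)`.
-/

open Finset

/-- Generalized binomial coefficient `Ch(x,r) = x(x-1)⋯(x-r+1)/r!`. -/
def gch (x : ℚ) (r : ℕ) : ℚ :=
  (∏ j ∈ Finset.range r, (x - (j : ℚ))) / (Nat.factorial r : ℚ)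

open Polynomial

theorem Polynomial.eq_of_eval_natCast_eq {R : Type*} [CommRing R] [IsDomain R] [CharZero R]
    {p q : R[X]} (N : ℕ) (h : ∀ n : ℕ, N ≤ n → p.eval (n : R) = q.eval (n : R)) : p = q := by
  refine eq_of_infinite_eval_eq p q (Set.infinite_of_injective_forall_mem
    (f := fun i : ℕ => ((N + i : ℕ) : R)) ?_ fun i => h _ (Nat.le_add_right N i))
  intro a b hab
  simpa using hab

theorem eq_natCast_of_recurrence {K : Type*} [Ring K] [IsDomain K] {f g a b : K → K}
    (N : ℕ) (ha : ∀ n : ℕ, N ≤ n → a n ≠ 0)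
    (hf : ∀ t, a t * f (t + 1) = b t * f t) (hg : ∀ t, a t * g (t + 1) = b t * g t)
    (hN : f N = g N) (n : ℕ) (hn : N ≤ n) : f n = g n := by
  induction n, hn using Nat.le_induction with
  | base => exact hN
  | succ n hn ih =>
    push_cast
    exact mul_left_cancel₀ (ha n hn) (by rw [hf, hg, ih])

theorem gch_eq_descPochhammer_eval_div (x : ℚ) (r : ℕ) :
    gch x r = (descPochhammer ℚ r).eval x / r.factorial := by
  rw [gch, descPochhammer_eval_eq_prod_range]

theorem gch_eq_eval_C_mul_descPochhammer (x : ℚ) (r : ℕ) :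
    gch x r = (C (r.factorial : ℚ)⁻¹ * descPochhammer ℚ r).eval x := by
  rw [gch_eq_descPochhammer_eval_div, eval_mul, eval_C, div_eq_inv_mul]

theorem gch_succ (x : ℚ) (r : ℕ) : gch x (r + 1) = gch x r * (x - r) / (r + 1) := by
  rw [gch_eq_descPochhammer_eval_div, gch_eq_descPochhammer_eval_div, descPochhammer_succ_eval,
    Nat.factorial_succ]
  push_cast
  field_simp

theorem gch_add_one_succ (x : ℚ) (r : ℕ) : gch (x + 1) (r + 1) = (x + 1) * gch x r / (r + 1) := by
  rw [gch_eq_descPochhammer_eval_div, gch_eq_descPochhammer_eval_div, descPochhammer_succ_left,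
    Nat.factorial_succ]
  simp only [eval_mul, eval_X, eval_comp, eval_sub, eval_one, add_sub_cancel_right]
  push_cast
  field_simp

theorem gch_add_one_mul (x : ℚ) (r : ℕ) : gch (x + 1) r * (x + 1 - r) = (x + 1) * gch x r := by
  have h := gch_succ (x + 1) r
  rw [gch_add_one_succ] at h
  field_simp at h
  linear_combination -h

theorem gch_natCast (n r : ℕ) : gch n r = n.choose r := by
  rw [gch_eq_descPochhammer_eval_div, descPochhammer_eval_eq_descFactorial,
    Nat.descFactorial_eq_factorial_mul_choose]
  push_cast
  field_simp

section BinomSum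

variable (m : ℕ)

def binomSumTerm (t : ℚ) (k : ℕ) : ℚ :=
  (-1 : ℚ) ^ k * (Nat.choose (2 * m) k : ℚ) * gch t (4 * m + 1 - k) * gch t (2 * m + 1 + k)

def binomSum (t : ℚ) : ℚ :=
  ∑ k ∈ Finset.range (2 * m + 1), binomSumTerm m t k

def binomSumClosedForm (t : ℚ) : ℚ :=
  ((-1 : ℚ) ^ m * (Nat.choose (2 * m) m : ℚ) / (Nat.choose (4 * m + 1) m : ℚ))
    * gch t (3 * m + 1) * gch (t + m) (3 * m + 1)

/-- Found by Zeilberger's algorithm. -/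
def binomSumCert (t : ℚ) (k : ℕ) : ℚ :=
  -(t + 1) * (k / 2) * (-1 : ℚ) ^ k * (Nat.choose (2 * m) k : ℚ)
    * gch t (4 * m + 1 - k) * gch t (2 * m + k)

variable {m}

theorem binomSumTerm_wz (t : ℚ) {k : ℕ} (hk : k ≤ 2 * m) :
    (t - 3 * m) * (t - 2 * m) * binomSumTerm m (t + 1) k
        - (t + 1) * (t + m + 1) * binomSumTerm m t k
      = binomSumCert m t (k + 1) - binomSumCert m t k := by
  obtain ⟨j, hj⟩ : ∃ j, k + j = 2 * m := ⟨2 * m - k, by omega⟩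
  have hchoose : (Nat.choose (2 * m) (k + 1) : ℚ) = Nat.choose (2 * m) k * j / (k + 1) := by
    rw [eq_div_iff (by positivity)]
    exact_mod_cast (Nat.choose_succ_right_eq (2 * m) k).trans
      (by rw [← hj, Nat.add_sub_cancel_left])
  have hjk : (j : ℚ) = 2 * m - k := by
    rw [eq_sub_iff_add_eq']; exact_mod_cast hj
  rw [binomSumTerm, binomSumTerm, binomSumCert, binomSumCert,
    show 4 * m + 1 - (k + 1) = 2 * m + j by omega, show 4 * m + 1 - k = 2 * m + j + 1 by omega,
    show 2 * m + (k + 1) = 2 * m + k + 1 by omega, show 2 * m + 1 + k = 2 * m + k + 1 by omega,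
    gch_add_one_succ, gch_add_one_succ, gch_succ, gch_succ, hchoose]
  push_cast
  field_simp
  rw [hjk]
  ring

theorem binomSum_recurrence (t : ℚ) :
    (t - 3 * m) * (t - 2 * m) * binomSum m (t + 1) = (t + 1) * (t + m + 1) * binomSum m t := by
  have htelescope := Finset.sum_range_sub (binomSumCert m t) (2 * m + 1)
  rw [Finset.sum_congr rfl fun k hk =>
      (binomSumTerm_wz t (Nat.lt_succ_iff.mp (mem_range.mp hk))).symm, Finset.sum_sub_distrib,
    ← Finset.mul_sum, ← Finset.mul_sum] at htelescope
  have hbottom : binomSumCert m t 0 = 0 := by simp [binomSumCert]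
  have htop : binomSumCert m t (2 * m + 1) = 0 := by simp [binomSumCert]
  rw [binomSum, binomSum]
  linear_combination htelescope + htop - hbottom

theorem binomSumClosedForm_recurrence (t : ℚ) :
    (t - 3 * m) * (t - 2 * m) * binomSumClosedForm m (t + 1)
      = (t + 1) * (t + m + 1) * binomSumClosedForm m t := by
  have h₁ := gch_add_one_mul t (3 * m + 1)
  have h₂ := gch_add_one_mul (t + m) (3 * m + 1)
  push_cast at h₁ h₂
  rw [binomSumClosedForm, binomSumClosedForm, add_right_comm t 1]
  linear_combination
    ((-1 : ℚ) ^ m * (Nat.choose (2 * m) m : ℚ) / (Nat.choose (4 * m + 1) m : ℚ))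
      * ((t - 2 * m) * gch (t + m + 1) (3 * m + 1) * h₁ + (t + 1) * gch t (3 * m + 1) * h₂)

theorem binomSum_base : binomSum m (3 * m + 1 : ℕ) = (-1) ^ m * Nat.choose (2 * m) m := by
  rw [binomSum, Finset.sum_eq_single_of_mem m (by simp; omega)]
  · rw [binomSumTerm, gch_natCast, gch_natCast, show 4 * m + 1 - m = 3 * m + 1 by omega,
      show 2 * m + 1 + m = 3 * m + 1 by omega, Nat.choose_self]
    simp
  · intro k hk hkm
    rw [mem_range] at hk
    rcases Nat.lt_or_gt_of_ne hkm with hlt | hgt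
    · rw [binomSumTerm, gch_natCast _ (4 * m + 1 - k),
        Nat.choose_eq_zero_of_lt (show 3 * m + 1 < 4 * m + 1 - k by omega)]
      simp
    · rw [binomSumTerm, gch_natCast _ (2 * m + 1 + k),
        Nat.choose_eq_zero_of_lt (show 3 * m + 1 < 2 * m + 1 + k by omega)]
      simp

theorem binomSumClosedForm_base :
    binomSumClosedForm m (3 * m + 1 : ℕ) = (-1) ^ m * Nat.choose (2 * m) m := by
  have harg : ((3 * m + 1 : ℕ) : ℚ) + m = (4 * m + 1 : ℕ) := by push_cast; ring
  have hchoose : (Nat.choose (4 * m + 1) m : ℚ) ≠ 0 := by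
    exact_mod_cast (Nat.choose_pos (by omega)).ne'
  rw [binomSumClosedForm, harg, gch_natCast, gch_natCast, Nat.choose_self,
    show 3 * m + 1 = 4 * m + 1 - m by omega, Nat.choose_symm (by omega)]
  field_simp
  simp

theorem binomSum_natCast_eq_closedForm (n : ℕ) (hn : 3 * m + 1 ≤ n) :
    binomSum m n = binomSumClosedForm m n := by
  refine eq_natCast_of_recurrence (3 * m + 1) (fun n hn => ?_) binomSum_recurrence
    binomSumClosedForm_recurrence (binomSum_base.trans binomSumClosedForm_base.symm) n hn
  have h₁ : (3 * m : ℚ) < n := by exact_mod_cast (by omega : 3 * m < n)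
  have h₂ : (2 * m : ℚ) < n := by exact_mod_cast (by omega : 2 * m < n)
  exact mul_ne_zero (sub_ne_zero.mpr h₁.ne') (sub_ne_zero.mpr h₂.ne')

theorem exists_eval_eq_binomSum : ∃ p : ℚ[X], ∀ t, binomSum m t = p.eval t :=
  ⟨∑ k ∈ Finset.range (2 * m + 1), C ((-1 : ℚ) ^ k * (Nat.choose (2 * m) k : ℚ))
      * (C ((4 * m + 1 - k).factorial : ℚ)⁻¹ * descPochhammer ℚ (4 * m + 1 - k))
      * (C ((2 * m + 1 + k).factorial : ℚ)⁻¹ * descPochhammer ℚ (2 * m + 1 + k)),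
    fun t => by simp only [binomSum, binomSumTerm, eval_finsetSum, eval_mul, eval_C,
      gch_eq_eval_C_mul_descPochhammer, mul_assoc]⟩

theorem exists_eval_eq_binomSumClosedForm : ∃ p : ℚ[X], ∀ t, binomSumClosedForm m t = p.eval t :=
  ⟨C ((-1 : ℚ) ^ m * (Nat.choose (2 * m) m : ℚ) / (Nat.choose (4 * m + 1) m : ℚ))
      * (C ((3 * m + 1).factorial : ℚ)⁻¹ * descPochhammer ℚ (3 * m + 1))
      * (C ((3 * m + 1).factorial : ℚ)⁻¹ * descPochhammer ℚ (3 * m + 1)).comp (X + C (m : ℚ)),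
    fun t => by simp only [binomSumClosedForm, eval_mul, eval_C, eval_comp, eval_add, eval_X,
      gch_eq_eval_C_mul_descPochhammer]⟩

end BinomSum

theorem stmt_5_general (m : ℕ) (t : ℚ) :
    ∑ k ∈ Finset.range (2 * m + 1),
        (-1 : ℚ) ^ k * (Nat.choose (2 * m) k : ℚ)
          * gch t (4 * m + 1 - k) * gch t (2 * m + 1 + k)
      = ((-1 : ℚ) ^ m * (Nat.choose (2 * m) m : ℚ) / (Nat.choose (4 * m + 1) m : ℚ))
          * gch t (3 * m + 1) * gch (t + m) (3 * m + 1) := by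
  obtain ⟨p, hp⟩ := exists_eval_eq_binomSum (m := m)
  obtain ⟨q, hq⟩ := exists_eval_eq_binomSumClosedForm (m := m)
  have hpq : p = q := Polynomial.eq_of_eval_natCast_eq (3 * m + 1) fun n hn => by
    rw [← hp, ← hq, binomSum_natCast_eq_closedForm n hn]
  have h := hp t
  rw [hpq, ← hq] at h
  exact h

/-- the identity
`∑_{k=0}^{2m} (−1)^k C(2m,k) Ch(t,4m+1−k) Ch(t,2m+1+k)
  = ((−1)^m C(2m,m)/C(4m+1,m)) Ch(t,3m+1) Ch(t+m,3m+1)`. -/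
theorem stmt_5 (m : ℕ) (hm : 1 ≤ m) (t : ℚ) :
    ∑ k ∈ Finset.range (2 * m + 1),
        (-1 : ℚ) ^ k * (Nat.choose (2 * m) k : ℚ)
          * gch t (4 * m + 1 - k) * gch t (2 * m + 1 + k)
      = ((-1 : ℚ) ^ m * (Nat.choose (2 * m) m : ℚ) / (Nat.choose (4 * m + 1) m : ℚ))
          * gch t (3 * m + 1) * gch (t + m) (3 * m + 1) :=
  stmt_5_general m t
end

section
/- Let m ≥ 1 be an integer. For every rational number t, Ch(t, 2m+1)² = ( (2(2m+1))^{2m+1} / ((2m+1)!)² ) · ∏_{i=0}^{2m} ( t(t−2m)/(2(2m+1)) − i(i−2m)/(2(2m+1)) ), where Ch(x,r) denotes the generalized binomial coefficient. (Equivalently, the point (x(t),y(t)) with x(t)=t(t−2m)/(2(2m+1)), y(t)=Ch(t,2m+1) lies on the curve y² = C_m ∏_{i=0}^{2m}(x − h^{2i+1,1}) with C_m = (2(2m+1))^{2m+1}/((2m+1)!)² and h^{2i+1,1} = i(i−2m)/(2(2m+1)).) -/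
open Finset

/-!
With `x(t) = t(t-n)/c`, each factor splits as `x(t) - x(i) = (t-i)(t+i-n)/c`. Reindexing
`i ↦ n - i` turns `∏ (t+i-n)` into `∏ (t-i)`, so the product over `i ≤ n` is the square of the
falling factorial `t(t-1)⋯(t-n)` divided by `c^(n+1)`; for `n = 2m`, `c = 2(2m+1)` this is
`((2m+1)!)² Ch(t,2m+1)² / c^(2m+1)`.
-/

theorem prod_range_add_sub_eq_prod_range_sub {R : Type*} [CommRing R] (n : ℕ) (t : R) :
    ∏ i ∈ range (n + 1), (t + i - n) = ∏ i ∈ range (n + 1), (t - i) := by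
  rw [← prod_range_reflect]
  refine prod_congr rfl fun i hi => ?_
  rw [Nat.add_sub_cancel, Nat.cast_sub (Nat.le_of_lt_succ (mem_range.1 hi))]
  ring

theorem prod_range_div_sub_div {K : Type*} [Field K] (n : ℕ) (c t : K) :
    ∏ i ∈ range (n + 1), (t * (t - n) / c - i * (i - n) / c)
      = (∏ i ∈ range (n + 1), (t - i)) ^ 2 / c ^ (n + 1) := by
  have factor : ∀ i : ℕ, t * (t - n) / c - i * (i - n) / c = (t - i) * (t + i - n) / c :=
    fun i => by ring
  simp only [factor, prod_div_distrib, prod_mul_distrib, prod_range_add_sub_eq_prod_range_sub,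
    prod_const, card_range]
  ring

theorem stmt_6_general (m : ℕ) (t : ℚ) :
    (gch t (2 * m + 1)) ^ 2
      = ((2 * (2 * m + 1) : ℚ) ^ (2 * m + 1) / ((Nat.factorial (2 * m + 1) : ℚ)) ^ 2)
        * ∏ i ∈ Finset.range (2 * m + 1),
            (t * (t - 2 * m) / (2 * (2 * m + 1))
              - (i : ℚ) * ((i : ℚ) - 2 * m) / (2 * (2 * m + 1))) := by
  have h := prod_range_div_sub_div (2 * m) (2 * (2 * m + 1) : ℚ) t
  push_cast at h
  rw [h, gch]
  have hfact : ((2 * m + 1).factorial : ℚ) ≠ 0 := by positivity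
  have hc : (2 * (2 * m + 1) : ℚ) ^ (2 * m + 1) ≠ 0 := by positivity
  field_simp

/-- the point `(x(t), y(t))` with `x(t) = t(t−2m)/(2(2m+1))`,
`y(t) = Ch(t,2m+1)` lies on the curve `y² = C_m ∏_{i=0}^{2m} (x − h^{2i+1,1})` with
`C_m = (2(2m+1))^{2m+1}/((2m+1)!)²` and `h^{2i+1,1} = i(i−2m)/(2(2m+1))`. -/
theorem stmt_6 (m : ℕ) (hm : 1 ≤ m) (t : ℚ) :
    (gch t (2 * m + 1)) ^ 2
      = ((2 * (2 * m + 1) : ℚ) ^ (2 * m + 1) / ((Nat.factorial (2 * m + 1) : ℚ)) ^ 2)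
        * ∏ i ∈ Finset.range (2 * m + 1),
            (t * (t - 2 * m) / (2 * (2 * m + 1))
              - (i : ℚ) * ((i : ℚ) - 2 * m) / (2 * (2 * m + 1))) :=
  stmt_6_general m t
end

section
/- Let m ≥ 1 be an integer. For every rational number t, ∏_{i=0}^{3m} ( t(t−2m)/(2(2m+1)) − i(i−2m)/(2(2m+1)) ) = ( ((3m+1)!)² / (2(2m+1))^{3m+1} ) · Ch(t, 3m+1) · Ch(t+m, 3m+1), where Ch(x,r) denotes the generalized binomial coefficient. -/
open Finset

/-!
Each factor splits as `t(t-2m) - i(i-2m) = (t - i)(t - 2m + i)`. Over `i ≤ 3m` the first factors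
give the falling factorial `t(t-1)⋯(t-3m)`, and the second ones, read backwards, give the falling
factorial `(t+m)(t+m-1)⋯(t-2m)`; these are `(3m+1)! Ch(t,3m+1)` and `(3m+1)! Ch(t+m,3m+1)`.
-/

theorem prod_range_succ_add_natCast {R : Type*} [CommRing R] (x : R) (n : ℕ) :
    ∏ i ∈ range (n + 1), (x + i) = ∏ j ∈ range (n + 1), (x + n - j) := by
  rw [← prod_range_reflect]
  refine prod_congr rfl fun j hj => ?_
  rw [Nat.add_sub_cancel, Nat.cast_sub (Nat.lt_succ_iff.mp (mem_range.mp hj))]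
  ring

theorem factorial_mul_gch (x : ℚ) (r : ℕ) :
    (r.factorial : ℚ) * gch x r = ∏ j ∈ range r, (x - j) :=
  mul_div_cancel₀ _ (by positivity)

theorem stmt_7_general (m : ℕ) (t : ℚ) :
    ∏ i ∈ Finset.range (3 * m + 1),
        (t * (t - 2 * m) / (2 * (2 * m + 1))
          - (i : ℚ) * ((i : ℚ) - 2 * m) / (2 * (2 * m + 1)))
      = ((Nat.factorial (3 * m + 1) : ℚ) ^ 2 / (2 * (2 * m + 1) : ℚ) ^ (3 * m + 1))
          * gch t (3 * m + 1) * gch (t + m) (3 * m + 1) := by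
  have hfactor : ∀ i ∈ range (3 * m + 1),
      t * (t - 2 * m) / (2 * (2 * m + 1)) - (i : ℚ) * ((i : ℚ) - 2 * m) / (2 * (2 * m + 1))
        = (t - i) * (t - 2 * m + i) / (2 * (2 * m + 1)) := fun i _ => by ring
  have hreflect : ∏ i ∈ range (3 * m + 1), (t - 2 * m + i)
      = ∏ j ∈ range (3 * m + 1), (t + m - j) := by
    rw [prod_range_succ_add_natCast]
    push_cast
    ring_nf
  rw [prod_congr rfl hfactor, prod_div_distrib, prod_mul_distrib, prod_const, card_range,
    hreflect, ← factorial_mul_gch, ← factorial_mul_gch]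
  field_simp

/-- the identity
`∏_{i=0}^{3m} (t(t−2m)/(2(2m+1)) − i(i−2m)/(2(2m+1)))
  = (((3m+1)!)²/(2(2m+1))^{3m+1}) · Ch(t,3m+1) · Ch(t+m,3m+1)`. -/
theorem stmt_7 (m : ℕ) (hm : 1 ≤ m) (t : ℚ) :
    ∏ i ∈ Finset.range (3 * m + 1),
        (t * (t - 2 * m) / (2 * (2 * m + 1))
          - (i : ℚ) * ((i : ℚ) - 2 * m) / (2 * (2 * m + 1)))
      = ((Nat.factorial (3 * m + 1) : ℚ) ^ 2 / (2 * (2 * m + 1) : ℚ) ^ (3 * m + 1))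
          * gch t (3 * m + 1) * gch (t + m) (3 * m + 1) :=
  stmt_7_general m t
end

section
/- Let m ≥ 1 be an integer such that p := 2m+1 is prime, and let i be an integer with 0 ≤ i ≤ 2m and i ≠ m. Then p divides the product C(3m+1, i) · C(3m+1, 2m−i) of ordinary binomial coefficients. -/
/-- Since `k, 3m+1-k < 2m+1 ≤ 3m+1`, the prime occurs in `(3m+1)!` but in neither `k!`
nor `(3m+1-k)!`. -/
lemma prime_dvd_choose_three_mul_add_one {m k : ℕ} (hp : Nat.Prime (2 * m + 1)) (hmk : m < k)
    (hk : k ≤ 2 * m) : (2 * m + 1) ∣ Nat.choose (3 * m + 1) k :=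
  hp.dvd_choose (by omega) (by omega) (by omega)

theorem stmt_11_general (m : ℕ) (hp : Nat.Prime (2 * m + 1))
    (i : ℕ) (hi : i ≤ 2 * m) (hne : i ≠ m) :
    (2 * m + 1) ∣ Nat.choose (3 * m + 1) i * Nat.choose (3 * m + 1) (2 * m - i) := by
  rcases lt_or_gt_of_ne hne with hlt | hgt
  · exact (prime_dvd_choose_three_mul_add_one hp (by omega) (by omega)).mul_left _
  · exact (prime_dvd_choose_three_mul_add_one hp hgt hi).mul_right _

/-- if `2m+1` is prime and `0 ≤ i ≤ 2m`, `i ≠ m`, then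
`2m+1` divides `C(3m+1, i) · C(3m+1, 2m−i)`. -/
theorem stmt_11 (m : ℕ) (hm : 1 ≤ m) (hp : Nat.Prime (2 * m + 1))
    (i : ℕ) (hi : i ≤ 2 * m) (hne : i ≠ m) :
    (2 * m + 1) ∣ Nat.choose (3 * m + 1) i * Nat.choose (3 * m + 1) (2 * m - i) :=
  stmt_11_general m hp i hi hne
end

section
/- For every real number q with 0 < q < 1, ∏_{n=1}^{∞} (1 − q^{2n})(1 − q^{n/2}) = ∑_{m₁=0}^{∞} ∑_{m₂=0}^{∞} (−1)^{m₁+m₂} · (−q^{1/2}; q^{1/2})_{m₂} · q^{m₁(m₁+1) + m₂(m₂+1)/4} / ( (q²; q²)_{m₁} · (q; q)_{m₂} ), where the double series converges absolutely. (Up to the prefactor q^{5/48}, the left-hand side equals η(2τ)η(τ/2).) -/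
/-!
With `p = √q` the product is `(q²;q²)_∞ (p;p)_∞`, and since `(q;q)_m = (p;p)_m (-p;p)_m` the double
series is the product of the series `∑ (-1)^m x^{m(m+1)/2} / (x;x)_m` at `x = q²` and `x = p`, each
of which equals `(x;x)_∞` by Euler. Euler's identity comes from the functional equation
`G(z) = (1 - z) G(xz)` of `G(z) = ∑ (-1)^m x^{m(m-1)/2} z^m / (x;x)_m`: iterating it gives
`G(x) = (x;x)_N G(x^{N+1})`, and `G(x^{N+1}) → G(0) = 1` by dominated convergence.
-/

open Finset

def qPoch (a x : ℝ) (n : ℕ) : ℝ :=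
  ∏ j ∈ Finset.range n, (1 - a * x ^ j)

open Filter Topology

lemma qPoch_succ (a x : ℝ) (n : ℕ) : qPoch a x (n + 1) = qPoch a x n * (1 - a * x ^ n) :=
  prod_range_succ _ _

lemma qPoch_pos {a x : ℝ} (ha : a < 1) (hx₀ : 0 ≤ x) (hx₁ : x ≤ 1) (n : ℕ) :
    0 < qPoch a x n :=
  prod_pos fun j _ => by
    have := pow_le_one₀ hx₀ hx₁ (n := j)
    have := pow_nonneg hx₀ j
    rcases le_or_gt a 0 with h | h <;> nlinarith

lemma qPoch_sq_sq (a x : ℝ) (n : ℕ) :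
    qPoch (a ^ 2) (x ^ 2) n = qPoch a x n * qPoch (-a) x n := by
  simp only [qPoch, ← prod_mul_distrib]
  exact prod_congr rfl fun j _ => by ring

lemma qPoch_self_eq_prod (x : ℝ) (n : ℕ) : qPoch x x n = ∏ j ∈ range n, (1 - x ^ (j + 1)) :=
  prod_congr rfl fun j _ => by rw [pow_succ']

section EulerProduct

variable {x : ℝ}

lemma hasProd_one_sub_pow (hx₀ : 0 ≤ x) (hx₁ : x < 1) :
    HasProd (fun n : ℕ => 1 - x ^ (n + 1)) (Real.exp (∑' n : ℕ, Real.log (1 - x ^ (n + 1)))) := by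
  have hpos (n : ℕ) : 0 < 1 - x ^ (n + 1) := sub_pos.2 (pow_lt_one₀ hx₀ hx₁ n.succ_ne_zero)
  have hsum : Summable fun n : ℕ => -x ^ (n + 1) :=
    ((summable_nat_add_iff 1).2 (summable_geometric_of_lt_one hx₀ hx₁)).neg
  refine Real.hasProd_of_hasSum_log hpos (Summable.hasSum ?_)
  simpa only [← sub_eq_add_neg] using Real.summable_log_one_add_of_summable hsum

lemma tprod_one_sub_pow_pos (hx₀ : 0 ≤ x) (hx₁ : x < 1) : 0 < ∏' n : ℕ, (1 - x ^ (n + 1)) :=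
  (hasProd_one_sub_pow hx₀ hx₁).tprod_eq ▸ Real.exp_pos _

lemma tendsto_qPoch_self (hx₀ : 0 ≤ x) (hx₁ : x < 1) :
    Tendsto (qPoch x x) atTop (𝓝 (∏' n : ℕ, (1 - x ^ (n + 1)))) :=
  (hasProd_one_sub_pow hx₀ hx₁).multipliable.hasProd.tendsto_prod_nat.congr fun n =>
    (qPoch_self_eq_prod x n).symm

lemma tprod_one_sub_pow_le_qPoch (hx₀ : 0 ≤ x) (hx₁ : x < 1) (n : ℕ) :
    ∏' n : ℕ, (1 - x ^ (n + 1)) ≤ qPoch x x n := by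
  refine Antitone.le_of_tendsto (antitone_nat_of_succ_le fun k => ?_) (tendsto_qPoch_self hx₀ hx₁) n
  rw [qPoch_succ]
  have := mul_nonneg (qPoch_pos hx₁ hx₀ hx₁.le k).le (mul_nonneg hx₀ (pow_nonneg hx₀ k))
  linarith

end EulerProduct

-- Euler's expansion of `(z; x)_∞` is `∑ n, eulerTerm x z n`.
noncomputable def eulerTerm (x z : ℝ) (n : ℕ) : ℝ :=
  (-1) ^ n * x ^ n.choose 2 * z ^ n / qPoch x x n

lemma eulerTerm_zero (x z : ℝ) : eulerTerm x z 0 = 1 := by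
  simp [eulerTerm, qPoch]

lemma eulerTerm_zero_right (x : ℝ) {n : ℕ} (hn : n ≠ 0) : eulerTerm x 0 n = 0 := by
  simp [eulerTerm, hn]

section EulerSeries

variable {x z : ℝ}

lemma norm_eulerTerm_le (hx₀ : 0 ≤ x) (hx₁ : x < 1) (hz : |z| ≤ x) (n : ℕ) :
    ‖eulerTerm x z n‖ ≤ x ^ n / ∏' k : ℕ, (1 - x ^ (k + 1)) := by
  have hC := tprod_one_sub_pow_pos hx₀ hx₁
  have hP := qPoch_pos hx₁ hx₀ hx₁.le n
  rw [eulerTerm, norm_div, norm_mul, norm_mul, norm_pow, norm_pow, norm_pow, norm_neg, norm_one,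
    one_pow, one_mul, Real.norm_of_nonneg hP.le, Real.norm_of_nonneg hx₀, Real.norm_eq_abs]
  calc x ^ n.choose 2 * |z| ^ n / qPoch x x n ≤ 1 * x ^ n / qPoch x x n := by
        gcongr
        · exact pow_le_one₀ hx₀ hx₁.le
    _ ≤ x ^ n / ∏' k : ℕ, (1 - x ^ (k + 1)) := by
        rw [one_mul]
        gcongr
        exact tprod_one_sub_pow_le_qPoch hx₀ hx₁ n

lemma summable_norm_eulerTerm (hx₀ : 0 ≤ x) (hx₁ : x < 1) (hz : |z| ≤ x) :
    Summable fun n => ‖eulerTerm x z n‖ :=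
  .of_nonneg_of_le (fun _ => norm_nonneg _) (norm_eulerTerm_le hx₀ hx₁ hz)
    ((summable_geometric_of_lt_one hx₀ hx₁).div_const _)

lemma eulerTerm_succ_sub (hx₀ : 0 ≤ x) (hx₁ : x < 1) (z : ℝ) (n : ℕ) :
    eulerTerm x z (n + 1) - eulerTerm x (x * z) (n + 1) = -z * eulerTerm x (x * z) n := by
  have hP := (qPoch_pos hx₁ hx₀ hx₁.le n).ne'
  have hf : 1 - x * x ^ n ≠ 0 :=
    (sub_pos.2 (pow_succ' x n ▸ pow_lt_one₀ hx₀ hx₁ n.succ_ne_zero)).ne'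
  simp only [eulerTerm, qPoch_succ, Nat.choose_succ_succ', Nat.choose_one_right, pow_add]
  field_simp
  linear_combination (-(x ^ n * x ^ n.choose 2 * z * z ^ n)) * mul_inv_cancel₀ hf

lemma tsum_eulerTerm_eq_one_sub_mul (hx₀ : 0 ≤ x) (hx₁ : x < 1) (hz : |z| ≤ x) :
    ∑' n, eulerTerm x z n = (1 - z) * ∑' n, eulerTerm x (x * z) n := by
  have hxz : |x * z| ≤ x := by
    rw [abs_mul, abs_of_nonneg hx₀]
    nlinarith [abs_nonneg z]
  have hf := (summable_norm_eulerTerm hx₀ hx₁ hz).of_norm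
  have hg := (summable_norm_eulerTerm hx₀ hx₁ hxz).of_norm
  have hdiff : ∑' n, (eulerTerm x z (n + 1) - eulerTerm x (x * z) (n + 1))
      = -z * ∑' n, eulerTerm x (x * z) n := by
    simp only [eulerTerm_succ_sub hx₀ hx₁, tsum_mul_left]
  rw [Summable.tsum_sub ((summable_nat_add_iff 1).2 hf) ((summable_nat_add_iff 1).2 hg)] at hdiff
  rw [hf.tsum_eq_zero_add, hg.tsum_eq_zero_add, eulerTerm_zero, eulerTerm_zero] at *
  linear_combination hdiff

lemma abs_pow_succ_le (hx₀ : 0 ≤ x) (hx₁ : x ≤ 1) (N : ℕ) : |x ^ (N + 1)| ≤ x := by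
  rw [abs_of_nonneg (pow_nonneg hx₀ _)]
  exact pow_le_of_le_one hx₀ hx₁ N.succ_ne_zero

lemma tsum_eulerTerm_self_eq_mul (hx₀ : 0 ≤ x) (hx₁ : x < 1) (N : ℕ) :
    ∑' n, eulerTerm x x n = qPoch x x N * ∑' n, eulerTerm x (x ^ (N + 1)) n := by
  induction N with
  | zero => simp [qPoch]
  | succ N ih =>
    rw [ih, tsum_eulerTerm_eq_one_sub_mul hx₀ hx₁ (abs_pow_succ_le hx₀ hx₁.le N), qPoch_succ,
      ← pow_succ', ← pow_succ']
    ring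

lemma tendsto_tsum_eulerTerm_pow (hx₀ : 0 ≤ x) (hx₁ : x < 1) :
    Tendsto (fun N : ℕ => ∑' n, eulerTerm x (x ^ (N + 1)) n) atTop (𝓝 1) := by
  have hpow : Tendsto (fun N : ℕ => x ^ (N + 1)) atTop (𝓝 0) :=
    (tendsto_pow_atTop_nhds_zero_of_lt_one hx₀ hx₁).comp (tendsto_add_atTop_nat 1)
  have hlim (n : ℕ) : Tendsto (fun N : ℕ => eulerTerm x (x ^ (N + 1)) n) atTop
      (𝓝 (eulerTerm x 0 n)) :=
    ((continuous_pow n).tendsto 0).comp hpow |>.const_mul _ |>.div_const _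
  have hbound : ∀ᶠ N in atTop, ∀ n, ‖eulerTerm x (x ^ (N + 1)) n‖
      ≤ x ^ n / ∏' k : ℕ, (1 - x ^ (k + 1)) :=
    .of_forall fun N => norm_eulerTerm_le hx₀ hx₁ (abs_pow_succ_le hx₀ hx₁.le N)
  have := tendsto_tsum_of_dominated_convergence
    ((summable_geometric_of_lt_one hx₀ hx₁).div_const _) hlim hbound
  rwa [tsum_eq_single 0 fun n hn => eulerTerm_zero_right x hn, eulerTerm_zero] at this

theorem tsum_eulerTerm_self (hx₀ : 0 ≤ x) (hx₁ : x < 1) :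
    ∑' n, eulerTerm x x n = ∏' n : ℕ, (1 - x ^ (n + 1)) := by
  have h := (tendsto_qPoch_self hx₀ hx₁).mul (tendsto_tsum_eulerTerm_pow hx₀ hx₁)
  rw [mul_one] at h
  exact tendsto_const_nhds_iff.mp (h.congr fun N => (tsum_eulerTerm_self_eq_mul hx₀ hx₁ N).symm)

end EulerSeries

lemma rpow_mul_triangle {y : ℝ} (hy : 0 ≤ y) (c : ℝ) (m : ℕ) :
    y ^ (c * (m * (m + 1) / 2)) = (y ^ c) ^ m.choose 2 * (y ^ c) ^ m := by
  rw [← pow_add, ← Real.rpow_natCast, ← Real.rpow_mul hy]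
  congr 1
  push_cast [Nat.cast_choose_two]
  ring

lemma summand_eq_eulerTerm_mul_eulerTerm {q : ℝ} (h0 : 0 < q) (h1 : q < 1) (m₁ m₂ : ℕ) :
    (-1 : ℝ) ^ (m₁ + m₂) * qPoch (-√q) √q m₂
        * q ^ ((m₁ : ℝ) * ((m₁ : ℝ) + 1) + (m₂ : ℝ) * ((m₂ : ℝ) + 1) / 4)
        / (qPoch (q ^ 2) (q ^ 2) m₁ * qPoch q q m₂)
      = eulerTerm (q ^ 2) (q ^ 2) m₁ * eulerTerm √q √q m₂ := by
  have hq₁ : q ^ 2 < 1 := pow_lt_one₀ h0.le h1 two_ne_zero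
  have hp₁ : √q < 1 := (Real.sqrt_lt' one_pos).2 (by rwa [one_pow])
  have e₁ : q ^ ((m₁ : ℝ) * ((m₁ : ℝ) + 1)) = (q ^ 2) ^ m₁.choose 2 * (q ^ 2) ^ m₁ := by
    rw [← Real.rpow_two, ← rpow_mul_triangle h0.le]
    ring_nf
  have e₂ : q ^ ((m₂ : ℝ) * ((m₂ : ℝ) + 1) / 4) = √q ^ m₂.choose 2 * √q ^ m₂ := by
    rw [Real.sqrt_eq_rpow, ← rpow_mul_triangle h0.le]
    ring_nf
  have e₃ : qPoch q q m₂ = qPoch √q √q m₂ * qPoch (-√q) √q m₂ := by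
    rw [← qPoch_sq_sq, Real.sq_sqrt h0.le]
  have := (qPoch_pos hq₁ (sq_nonneg q) hq₁.le m₁).ne'
  have := (qPoch_pos hp₁ (Real.sqrt_nonneg q) hp₁.le m₂).ne'
  have := (qPoch_pos (by linarith [Real.sqrt_nonneg q]) (Real.sqrt_nonneg q) hp₁.le m₂ :
    0 < qPoch (-√q) √q m₂).ne'
  rw [Real.rpow_add h0, e₁, e₂, e₃]
  simp only [eulerTerm]
  field_simp
  ring

/-- double-sum fermionic expression for
`∏_{n≥1} (1-q^{2n})(1-q^{n/2})`, with absolute convergence. -/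
theorem stmt_14 (q : ℝ) (h0 : 0 < q) (h1 : q < 1) :
    Multipliable (fun n : ℕ => (1 - q ^ (2 * n + 2)) * (1 - Real.sqrt q ^ (n + 1)))
      ∧ Summable (fun p : ℕ × ℕ =>
          (-1 : ℝ) ^ (p.1 + p.2) * qPoch (-(Real.sqrt q)) (Real.sqrt q) p.2
            * q ^ ((p.1 : ℝ) * ((p.1 : ℝ) + 1) + (p.2 : ℝ) * ((p.2 : ℝ) + 1) / 4)
            / (qPoch (q ^ 2) (q ^ 2) p.1 * qPoch q q p.2))
      ∧ (∏' n : ℕ, (1 - q ^ (2 * n + 2)) * (1 - Real.sqrt q ^ (n + 1)))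
          = ∑' p : ℕ × ℕ,
              (-1 : ℝ) ^ (p.1 + p.2) * qPoch (-(Real.sqrt q)) (Real.sqrt q) p.2
                * q ^ ((p.1 : ℝ) * ((p.1 : ℝ) + 1) + (p.2 : ℝ) * ((p.2 : ℝ) + 1) / 4)
                / (qPoch (q ^ 2) (q ^ 2) p.1 * qPoch q q p.2) := by
  have hq₀ : 0 ≤ q ^ 2 := sq_nonneg q
  have hq₁ : q ^ 2 < 1 := pow_lt_one₀ h0.le h1 two_ne_zero
  have hp₀ : 0 ≤ √q := Real.sqrt_nonneg q
  have hp₁ : √q < 1 := (Real.sqrt_lt' one_pos).2 (by rwa [one_pow])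
  have hA := summable_norm_eulerTerm hq₀ hq₁ (abs_of_nonneg hq₀).le
  have hB := summable_norm_eulerTerm hp₀ hp₁ (abs_of_nonneg hp₀).le
  have hsum := hA.of_norm.hasSum.mul hB.of_norm.hasSum (summable_mul_of_summable_norm hA hB)
  rw [tsum_eulerTerm_self hq₀ hq₁, tsum_eulerTerm_self hp₀ hp₁] at hsum
  simp only [← summand_eq_eulerTerm_mul_eulerTerm h0 h1] at hsum
  have hprod := (hasProd_one_sub_pow hq₀ hq₁).multipliable.hasProd.mul
    (hasProd_one_sub_pow hp₀ hp₁).multipliable.hasProd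
  have hfactor (n : ℕ) : 1 - q ^ (2 * n + 2) = 1 - (q ^ 2) ^ (n + 1) := by ring
  simp only [hfactor]
  exact ⟨hprod.multipliable, hsum.summable, hprod.tprod_eq.trans hsum.tsum_eq.symm⟩
end
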